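/- Let F: M₊ → N₊ be a local diffeomorphism written in normal-form coordinates as (r,x) ↦ (F^s(r,x), F^{\bar i}(r,x)) with F^s(0,x) = 0. If F maps every surface orthogonal to the boundary to a surface orthogonal to the boundary (in the compactified metrics ḡ = dr² + g_r, h̄ = ds² + h_s), then F^{\bar i}_{,r} = 0 on {r = 0} for all i, and consequently F^s_{,r} ≠ 0 on {r = 0}. -/

import Mathlib

/-!
At a boundary point the differential `A = dF` kills the `s`-component of every boundary
direction, since `F` maps `{r = 0}` into `{s = 0}`. Writing `(1, 0) = c • A ∂_r + d • A ∂_v`, the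
`s`-components give `c * F^s_{,r} = 1`, and the `x`-components show that `F^{x̄}_{,r}` is parallel
to the tangential part `T v` of `A ∂_v`. Since `A` is invertible, so is `T`; hence `F^{x̄}_{,r}`
is parallel to every nonzero vector of the boundary, which in dimension at least two forces it
to vanish.
-/

open Module Submodule

theorem fst_fderiv_apply_inr_eq_zero {𝕜 E₁ E₂ F₁ F₂ : Type*} [NontriviallyNormedField 𝕜]
    [NormedAddCommGroup E₁] [NormedSpace 𝕜 E₁] [NormedAddCommGroup E₂] [NormedSpace 𝕜 E₂]
    [NormedAddCommGroup F₁] [NormedSpace 𝕜 F₁] [NormedAddCommGroup F₂] [NormedSpace 𝕜 F₂]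
    {f : E₁ × E₂ → F₁ × F₂} {a : E₁} {c : F₁} (hf : ∀ x, (f (a, x)).1 = c) {x : E₂}
    (hfx : DifferentiableAt 𝕜 f (a, x)) (v : E₂) : (fderiv 𝕜 f (a, x) (0, v)).1 = 0 := by
  have hcomp : HasFDerivAt (fun y => (f (a, y)).1)
      ((ContinuousLinearMap.fst 𝕜 F₁ F₂).comp
        ((fderiv 𝕜 f (a, x)).comp (ContinuousLinearMap.inr 𝕜 E₁ E₂))) x :=
    (ContinuousLinearMap.fst 𝕜 F₁ F₂).hasFDerivAt.comp x
      (hfx.hasFDerivAt.comp x (hasFDerivAt_prodMk_right a x))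
  have hconst : HasFDerivAt (fun y => (f (a, y)).1) (0 : E₂ →L[𝕜] F₁) x := by
    simpa only [hf] using hasFDerivAt_const c x
  simpa using congrArg (fun L : E₂ →L[𝕜] F₁ => L v) (hcomp.unique hconst)

section LinearAlgebra

variable {K E : Type*} [Field K] [AddCommGroup E] [Module K E]

theorem fst_ne_zero_and_snd_mem_span_of_mem_span_pair {p q : K × E} (hq : q.1 = 0)
    (h : ((1 : K), (0 : E)) ∈ span K {p, q}) : p.1 ≠ 0 ∧ p.2 ∈ K ∙ q.2 := by
  obtain ⟨c, d, hcd⟩ := mem_span_pair.1 h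
  have hfst : c * p.1 = 1 := by simpa [hq] using congrArg Prod.fst hcd
  have hsnd : c • p.2 + d • q.2 = 0 := by simpa using congrArg Prod.snd hcd
  have hc : c ≠ 0 := left_ne_zero_of_mul_eq_one hfst
  refine ⟨right_ne_zero_of_mul_eq_one hfst, mem_span_singleton.2 ⟨-(d / c), ?_⟩⟩
  rw [← smul_right_inj hc, eq_neg_of_add_eq_zero_left hsnd]
  match_scalars
  field_simp

theorem eq_zero_of_forall_mem_span_singleton (hE : 1 < finrank K E) {a : E}
    (ha : ∀ w : E, w ≠ 0 → a ∈ K ∙ w) : a = 0 := by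
  by_contra ha0
  obtain ⟨w, hw⟩ := exists_linearIndependent_pair_of_one_lt_finrank hE ha0
  obtain ⟨t, rfl⟩ := mem_span_singleton.1 (ha w (hw.ne_zero 1))
  have := LinearIndependent.pair_iff.1 hw 1 (-t) (by simp)
  exact one_ne_zero this.1

variable [FiniteDimensional K E]

theorem snd_eq_zero_and_fst_ne_zero_of_forall_mem_span_pair (hE : 2 ≤ finrank K E)
    (A : K × E →ₗ[K] K × E) (hA : Function.Injective A) (hbd : ∀ v, (A (0, v)).1 = 0)
    (hortho : ∀ v : E, v ≠ 0 → ((1 : K), (0 : E)) ∈ span K {A (1, 0), A (0, v)}) :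
    (A (1, 0)).2 = 0 ∧ (A (1, 0)).1 ≠ 0 := by
  set T : E →ₗ[K] E := LinearMap.snd K K E ∘ₗ A ∘ₗ LinearMap.inr K K E
  have hT : Function.Injective T := fun u w huw =>
    congrArg Prod.snd (hA (Prod.ext ((hbd u).trans (hbd w).symm) huw))
  have hkey (v : E) (hv : v ≠ 0) := fst_ne_zero_and_snd_mem_span_of_mem_span_pair (hbd v)
    (hortho v hv)
  have : Nontrivial E := nontrivial_of_finrank_pos (R := K) (by omega)
  obtain ⟨v₀, hv₀⟩ := exists_ne (0 : E)
  refine ⟨eq_zero_of_forall_mem_span_singleton hE fun w hw => ?_, (hkey v₀ hv₀).1⟩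
  obtain ⟨v, rfl⟩ := LinearMap.injective_iff_surjective.1 hT w
  exact (hkey v fun hv => hw (by simp [hv])).2

end LinearAlgebra

theorem stmt17 {E : Type*} [NormedAddCommGroup E] [InnerProductSpace ℝ E]
    [FiniteDimensional ℝ E] (hdim : 2 ≤ Module.finrank ℝ E)
    (F : ℝ × E → ℝ × E) (hFsm : ContDiff ℝ (⊤ : ℕ∞) F)
    (hFbij : ∀ p : ℝ × E, Function.Bijective (fderiv ℝ F p))
    (hFbd : ∀ x : E, (F (0, x)).1 = 0)
    (hortho : ∀ (x : E) (v : E), v ≠ 0 →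
      ((1:ℝ), (0:E)) ∈ Submodule.span ℝ
        {fderiv ℝ F (0, x) (1, 0), fderiv ℝ F (0, x) (0, v)}) :
    ∀ x : E, (fderiv ℝ F (0, x) (1, 0)).2 = 0 ∧ (fderiv ℝ F (0, x) (1, 0)).1 ≠ 0 := fun x =>
  snd_eq_zero_and_fst_ne_zero_of_forall_mem_span_pair hdim (fderiv ℝ F (0, x)) (hFbij _).1
    (fst_fderiv_apply_inr_eq_zero hFbd (hFsm.differentiable (by simp) _)) (hortho x)
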